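/- arXiv:2502.01762 — 4 statements merged into one kernel-verified Lean document; each statement's English description precedes it below -/
import Mathlib

section
/- Let κ be a regular uncountable cardinal. If every thin κ-list has a cofinal branch, then every thin P_κ(κ)-list has a cofinal branch. -/
/-!
Here `P_κ(κ)` is modelled as the collection of subsets of cardinality `< κ` of
the canonical well-ordered type `κ.ord.ToType` of order type (the initial
ordinal of) `κ`, and the ordinals `α < κ` are the elements of that type, an
ordinal `α` being identified with the initial segment `Set.Iio α`.
-/

open Cardinal Set

universe u

/-- The level of the `P_κ(X)`-list `d` at `z` : all sets of the form `d y ∩ z`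
for `y ∈ P_κ(X)` with `y ⊇ z`. -/
def listLevel {X : Type u} (κ : Cardinal.{u}) (d : Set X → Set X) (z : Set X) :
    Set (Set X) :=
  {s | ∃ y : Set X, #y < κ ∧ z ⊆ y ∧ s = d y ∩ z}

/-- `d` is a thin `P_κ(X)`-list. -/
def IsThinList {X : Type u} (κ : Cardinal.{u}) (d : Set X → Set X) : Prop :=
  (∀ z : Set X, #z < κ → d z ⊆ z) ∧ ∀ z : Set X, #z < κ → #(listLevel κ d z) < κ

/-- `b` is a cofinal branch of the `P_κ(X)`-list `d`. -/
def IsCofinalBranch {X : Type u} (κ : Cardinal.{u}) (d : Set X → Set X) (b : Set X) : Prop :=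
  ∀ z : Set X, #z < κ → b ∩ z ∈ listLevel κ d z

/-- The level at `α` of a `κ`-list `d = ⟨d_α : α < κ⟩` : all sets `d β ∩ α` for
`β > α`. -/
def seqLevel {X : Type u} [LinearOrder X] (d : X → Set X) (α : X) : Set (Set X) :=
  {s | ∃ β : X, α < β ∧ s = d β ∩ Set.Iio α}

/-- `d` is a thin `κ`-list: `d_α ⊆ α` for all `α < κ` and every level has
cardinality `< κ`. -/
def IsThinSeqList {X : Type u} [LinearOrder X] (κ : Cardinal.{u}) (d : X → Set X) : Prop :=
  (∀ α : X, d α ⊆ Set.Iio α) ∧ ∀ α : X, #(seqLevel d α) < κ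

/-- `b` is a cofinal branch of the `κ`-list `d`: `b ∩ α` lies in the level at
`α`, for every `α < κ`. -/
def IsSeqBranch {X : Type u} [LinearOrder X] (d : X → Set X) (b : Set X) : Prop :=
  ∀ α : X, b ∩ Set.Iio α ∈ seqLevel d α

/-- If `κ` is regular uncountable and every thin `κ`-list has a cofinal branch,
then every thin `P_κ(κ)`-list has a cofinal branch. -/
theorem stmt2 (κ : Cardinal.{u}) (hreg : κ.IsRegular) (huncount : ℵ₀ < κ)
    (h : ∀ d : κ.ord.ToType → Set κ.ord.ToType, IsThinSeqList κ d →
      ∃ b : Set κ.ord.ToType, IsSeqBranch d b) :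
    ∀ d : Set κ.ord.ToType → Set κ.ord.ToType, IsThinList κ d →
      ∃ b : Set κ.ord.ToType, IsCofinalBranch κ d b := by
  intro d hd
  obtain ⟨hsub, hthin⟩ := hd
  have hIio : ∀ α : κ.ord.ToType, #(Iio α) < κ := fun α => Cardinal.mk_Iio_ord_toType α
  have hethin : IsThinSeqList κ (fun α => d (Iio α)) := by
    constructor
    · intro α
      exact hsub _ (hIio α)
    · intro α
      have hmono : seqLevel (fun α => d (Iio α)) α ⊆ listLevel κ d (Iio α) := by
        rintro s ⟨β, hβ, rfl⟩
        exact ⟨Iio β, hIio β, fun x hx => lt_trans hx hβ, rfl⟩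
      exact lt_of_le_of_lt (Cardinal.mk_le_mk_of_subset hmono) (hthin _ (hIio α))
  obtain ⟨b, hb⟩ := h _ hethin
  refine ⟨b, fun z hz => ?_⟩
  haveI : IsWellOrder κ.ord.ToType (· < ·) := isWellOrder_lt
  have hbd : Set.Bounded (· < ·) z := by
    by_contra hnb
    have hc : IsCofinal z := fun a => by
      by_contra hna
      push_neg at hna
      exact hnb ⟨a, fun x hx => hna x hx⟩
    have hle := Order.cof_le hc
    rw [Ordinal.cof_toType, hreg.cof_ord] at hle
    exact absurd hz (not_lt.2 hle)
  obtain ⟨α, hα⟩ := hbd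
  obtain ⟨β, hβ, hbe⟩ := hb α
  have hzα : z ⊆ Iio α := fun x hx => hα x hx
  refine ⟨Iio β, hIio β, fun x hx => lt_trans (hzα hx) hβ, ?_⟩
  have h2 := congrArg (· ∩ z) hbe
  simp only at h2
  rwa [inter_assoc, inter_assoc, inter_eq_self_of_subset_right hzα] at h2
end

section
/- Let κ be a regular uncountable cardinal and let d = ⟨d_z : z ∈ P_κ(κ)⟩ be a thin P_κ(κ)-list. Let d* = ⟨d_α : α < κ⟩ be the restriction of d to those indices that are ordinals (each ordinal α < κ being regarded as the subset α ⊆ κ, which lies in P_κ(κ)). Then d* is a thin κ-list, and if d* has a cofinal branch then d has a cofinal branch. -/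
open Cardinal Set

universe u

/-- Let `κ` be regular uncountable and let `d` be a thin `P_κ(κ)`-list.  Let
`d*` be the restriction of `d` to those indices that are (initial segments
corresponding to) ordinals `α < κ`.  Then `d*` is a thin `κ`-list, and if `d*`
has a cofinal branch then so does `d`. -/
theorem stmt3 (κ : Cardinal.{u}) (hreg : κ.IsRegular) (huncount : ℵ₀ < κ)
    (d : Set κ.ord.ToType → Set κ.ord.ToType) (hd : IsThinList κ d) :
    IsThinSeqList κ (fun α : κ.ord.ToType => d (Set.Iio α)) ∧
    ((∃ b : Set κ.ord.ToType, IsSeqBranch (fun α : κ.ord.ToType => d (Set.Iio α)) b) →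
      ∃ b : Set κ.ord.ToType, IsCofinalBranch κ d b) := by
  have hIio : ∀ α : κ.ord.ToType, #(Set.Iio α) < κ := fun α => mk_Iio_ord_toType α
  constructor
  · constructor
    · intro α
      exact hd.1 (Set.Iio α) (hIio α)
    · intro α
      refine lt_of_le_of_lt (Cardinal.mk_le_mk_of_subset ?_) (hd.2 (Set.Iio α) (hIio α))
      rintro s ⟨β, hβ, rfl⟩
      exact ⟨Set.Iio β, hIio β, fun x hx => lt_trans hx hβ, rfl⟩
  · rintro ⟨b, hb⟩
    refine ⟨b, fun z hz => ?_⟩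
    -- z is bounded
    have hbdd : ∃ α : κ.ord.ToType, ∀ x ∈ z, x < α := by
      have hnc : ¬ IsCofinal z := fun h =>
        (Order.cof_le h).not_gt (by rwa [Ordinal.cof_toType, hreg.cof_ord])
      simp only [IsCofinal, not_forall, not_exists, not_and, not_le] at hnc
      exact hnc
    obtain ⟨α, hα⟩ := hbdd
    obtain ⟨β, hβ, hbβ⟩ := hb α
    have hzα : z ⊆ Set.Iio α := fun x hx => hα x hx
    refine ⟨Set.Iio β, hIio β, fun x hx => lt_trans (hzα hx) hβ, ?_⟩
    have : b ∩ z = (b ∩ Set.Iio α) ∩ z := by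
      rw [Set.inter_assoc, Set.inter_eq_self_of_subset_right hzα]
    rw [this, hbβ, Set.inter_assoc, Set.inter_eq_self_of_subset_right hzα]
end

section
/- Let κ be a regular uncountable cardinal and let λ be a cardinal with |λ| = κ (i.e., there is a bijection between λ and κ). If every thin κ-list has a cofinal branch, then every thin P_κ(λ)-list has a cofinal branch. -/
/-!
Here the ordinals `α < κ` are modelled as the elements of the canonical
well-ordered type `κ.ord.toType` of order type the initial ordinal of `κ`,
and `λ` (a cardinal with `|λ| = κ`) is modelled by its canonical underlying
type `lam.out`, the hypothesis `|λ| = κ` being a bijection between `lam.out`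
and `κ.ord.toType`.
-/

open Cardinal Set

universe u

-- auxiliary: subsets of κ.ord.ToType of size < κ are strictly bounded
lemma small_bounded {κ : Cardinal.{u}} (hreg : κ.IsRegular)
    (S : Set κ.ord.ToType) (hS : #S < κ) : ∃ α, S ⊆ Set.Iio α := by
  by_contra hne
  have hc : IsCofinal S := fun a => by
    obtain ⟨x, hx, hxa⟩ := Set.not_subset.1 (fun hs => hne ⟨a, hs⟩)
    exact ⟨x, hx, not_lt.1 hxa⟩
  have := Order.cof_le hc
  rw [Ordinal.cof_toType, hreg.cof_ord] at this
  exact absurd hS (not_lt.2 this)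

/-- Let `κ` be a regular uncountable cardinal and `λ` a cardinal with `|λ| = κ`
(i.e. there is a bijection between `λ` and `κ`).  If every thin `κ`-list has a
cofinal branch, then every thin `P_κ(λ)`-list has a cofinal branch. -/
theorem stmt4 (κ lam : Cardinal.{u}) (hreg : κ.IsRegular) (huncount : ℵ₀ < κ)
    (hbij : Nonempty (lam.out ≃ κ.ord.ToType))
    (h : ∀ d : κ.ord.ToType → Set κ.ord.ToType, IsThinSeqList κ d →
      ∃ b : Set κ.ord.ToType, IsSeqBranch d b) :
    ∀ d : Set lam.out → Set lam.out, IsThinList κ d →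
      ∃ b : Set lam.out, IsCofinalBranch κ d b := by
  obtain ⟨e⟩ := hbij
  intro d hd
  obtain ⟨hd1, hd2⟩ := hd
  -- the induced κ-list
  set T := κ.ord.ToType with hT
  have hmkIio : ∀ α : T, #(e ⁻¹' Set.Iio α) < κ := by
    intro α
    calc #(e ⁻¹' Set.Iio α) = #(Set.Iio α) :=
          Cardinal.mk_preimage_of_injective_of_subset_range e _ e.injective
            (fun x _ => ⟨e.symm x, e.apply_symm_apply x⟩)
      _ < κ := Cardinal.mk_Iio_ord_toType α
  set d' : T → Set T := fun α => (e '' d (e ⁻¹' Set.Iio α)) ∩ Set.Iio α with hd'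
  -- key computation
  have key : ∀ α β : T, α ≤ β → d' β ∩ Set.Iio α
      = e '' (d (e ⁻¹' Set.Iio β) ∩ (e ⁻¹' Set.Iio α)) := by
    intro α β hab
    ext x
    simp only [hd', Set.mem_inter_iff, Set.mem_image, Set.mem_Iio, Set.mem_preimage]
    constructor
    · rintro ⟨⟨⟨w, hw, rfl⟩, _⟩, hxa⟩
      exact ⟨w, ⟨hw, hxa⟩, rfl⟩
    · rintro ⟨w, ⟨hw, hwa⟩, rfl⟩
      exact ⟨⟨⟨w, hw, rfl⟩, lt_of_lt_of_le hwa hab⟩, hwa⟩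
  have thin' : IsThinSeqList κ d' := by
    constructor
    · intro α; exact Set.inter_subset_right
    · intro α
      have hsub : seqLevel d' α ⊆ (Set.image e) '' (listLevel κ d (e ⁻¹' Set.Iio α)) := by
        rintro s ⟨β, hb, rfl⟩
        refine ⟨d (e ⁻¹' Set.Iio β) ∩ (e ⁻¹' Set.Iio α), ⟨e ⁻¹' Set.Iio β, hmkIio β,
          fun x hx => lt_trans hx hb, rfl⟩, (key α β hb.le).symm⟩
      calc #(seqLevel d' α) ≤ #((Set.image e) '' (listLevel κ d (e ⁻¹' Set.Iio α))) :=
            Cardinal.mk_le_mk_of_subset hsub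
        _ ≤ #(listLevel κ d (e ⁻¹' Set.Iio α)) := Cardinal.mk_image_le
        _ < κ := hd2 _ (hmkIio α)
  obtain ⟨b', hb'⟩ := h d' thin'
  refine ⟨e ⁻¹' b', ?_⟩
  intro z hz
  have hSz : #(e '' z) < κ := lt_of_le_of_lt Cardinal.mk_image_le hz
  obtain ⟨α, hα⟩ := small_bounded hreg (e '' z) hSz
  obtain ⟨β, hβ, heq⟩ := hb' α
  refine ⟨e ⁻¹' Set.Iio β, hmkIio β, ?_, ?_⟩
  · intro x hx
    exact lt_trans (hα ⟨x, hx, rfl⟩) hβ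
  · ext x
    have hx' : x ∈ z → e x < α := fun hx => hα ⟨x, hx, rfl⟩
    constructor
    · rintro ⟨hxb, hxz⟩
      have : e x ∈ b' ∩ Set.Iio α := ⟨hxb, hx' hxz⟩
      rw [heq] at this
      have := (key α β hβ.le ▸ this : e x ∈ _)
      obtain ⟨w, ⟨hw, _⟩, hwx⟩ := this
      exact ⟨by rwa [← e.injective hwx], hxz⟩
    · rintro ⟨hxd, hxz⟩
      have : e x ∈ d' β ∩ Set.Iio α := by
        rw [key α β hβ.le]
        exact ⟨x, ⟨hxd, hx' hxz⟩, rfl⟩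
      rw [← heq] at this
      exact ⟨this.1, hxz⟩
end

section
/- Let κ be a regular uncountable cardinal. If every thin κ-list has a cofinal branch, then the tree property holds at κ: every κ-tree has a cofinal branch. -/
open Cardinal Set

universe u

/-- The level of an element `t` of a tree: the order type of its set of strict
predecessors, assuming (`hwo`) that this set is well-ordered by `<`. -/
noncomputable def treeLevel {T : Type u} [PartialOrder T] (t : T)
    (hwo : IsWellOrder {s : T // s < t} fun a b => a.1 < b.1) : Ordinal.{u} :=
  @Ordinal.type {s : T // s < t} (fun a b => a.1 < b.1) hwo

section Aux

variable {T : Type u} [PartialOrder T] {κ : Cardinal.{u}}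
  (hwo : ∀ t : T, IsWellOrder {s : T // s < t} fun a b => a.1 < b.1)

theorem treeLevel_eq_typein {s t : T} (hst : s < t) :
    treeLevel s (hwo s) =
      @Ordinal.typein {v : T // v < t} (fun a b => a.1 < b.1) (hwo t) ⟨s, hst⟩ := by
  haveI := hwo t
  haveI := hwo s
  rw [← @Ordinal.type_subrel {v : T // v < t} (fun a b => a.1 < b.1) (hwo t) ⟨s, hst⟩]
  refine Ordinal.type_eq.2 ⟨?_⟩
  exact {
    toFun := fun v => ⟨⟨v.1, lt_trans v.2 hst⟩, v.2⟩
    invFun := fun x => ⟨x.1.1, x.2⟩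
    left_inv := fun v => rfl
    right_inv := fun x => rfl
    map_rel_iff' := Iff.rfl }

theorem treeLevel_lt_of_lt {s t : T} (hst : s < t) :
    treeLevel s (hwo s) < treeLevel t (hwo t) := by
  rw [treeLevel_eq_typein hwo hst]
  exact @Ordinal.typein_lt_type _ _ (hwo t) ⟨s, hst⟩

theorem cardTle (hreg : κ.IsRegular)
    (hsmall : ∀ α : Ordinal.{u}, α < κ.ord → #{t : T | treeLevel t (hwo t) = α} < κ)
    {L : Ordinal.{u}} (hL : L < κ.ord) :
    #{u : T | treeLevel u (hwo u) ≤ L} < κ := by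
  have hsL : Order.succ L < κ.ord := (Cardinal.isSuccLimit_ord hreg.aleph0_le).succ_lt hL
  have hι : #(Order.succ L).ToType < κ := by
    rw [Cardinal.mk_toType]; exact Cardinal.lt_ord.1 hsL
  have hsub : {u : T | treeLevel u (hwo u) ≤ L} ⊆
      ⋃ i : (Order.succ L).ToType,
        {u : T | treeLevel u (hwo u) = @Ordinal.typein _ (· < ·) isWellOrder_lt i} := by
    intro u hu
    have : treeLevel u (hwo u) <
        @Ordinal.type (Order.succ L).ToType (· < ·) isWellOrder_lt := by
      rw [Ordinal.type_toType]
      exact lt_of_le_of_lt hu (Order.lt_succ L)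
    obtain ⟨i, hi⟩ := @Ordinal.typein_surj _ (· < ·) isWellOrder_lt _ this
    exact Set.mem_iUnion.2 ⟨i, hi.symm⟩
  refine lt_of_le_of_lt (Cardinal.mk_le_mk_of_subset hsub) ?_
  refine lt_of_le_of_lt (Cardinal.mk_iUnion_le _) ?_
  apply Cardinal.mul_lt_of_lt hreg.aleph0_le hι
  apply Cardinal.iSup_lt_of_isRegular hreg hι
  intro i
  refine hsmall _ (lt_trans ?_ hsL)
  exact Ordinal.typein_lt_self i

end Aux

/-- Let `κ` be regular uncountable.  If every thin `κ`-list has a cofinal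
branch, then the tree property holds at `κ`: every `κ`-tree — a partial order
`T` in which the predecessors of every element are well-ordered, every level
`α < κ` is nonempty of cardinality `< κ`, and every element has level `< κ` —
has a cofinal branch, i.e. a chain meeting every level `α < κ`. -/
theorem stmt5 (κ : Cardinal.{u}) (hreg : κ.IsRegular) (huncount : ℵ₀ < κ)
    (h : ∀ d : κ.ord.ToType → Set κ.ord.ToType, IsThinSeqList κ d →
      ∃ b : Set κ.ord.ToType, IsSeqBranch d b)
    (T : Type u) [PartialOrder T]
    (hwo : ∀ t : T, IsWellOrder {s : T // s < t} fun a b => a.1 < b.1)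
    (hne : ∀ α : Ordinal.{u}, α < κ.ord → ∃ t : T, treeLevel t (hwo t) = α)
    (hsmall : ∀ α : Ordinal.{u}, α < κ.ord → #{t : T | treeLevel t (hwo t) = α} < κ)
    (hheight : ∀ t : T, treeLevel t (hwo t) < κ.ord) :
    ∃ b : Set T, IsChain (· ≤ ·) b ∧
      ∀ α : Ordinal.{u}, α < κ.ord → ∃ t ∈ b, treeLevel t (hwo t) = α := by
  classical
  haveI iwoX : IsWellOrder κ.ord.ToType (· < ·) := isWellOrder_lt
  -- the auxiliary well-order on T : first by level, then by a fixed well-ordering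
  set rT : T → T → Prop := fun s t =>
    Prod.Lex ((· < ·) : Ordinal.{u} → Ordinal.{u} → Prop) WellOrderingRel
      (treeLevel s (hwo s), s) (treeLevel t (hwo t), t) with hrT
  haveI irT : IsWellOrder T rT := by
    refine @RelEmbedding.isWellOrder T (Ordinal.{u} × T) rT
      (Prod.Lex ((· < ·) : Ordinal.{u} → Ordinal.{u} → Prop) WellOrderingRel)
      ⟨⟨fun t => (treeLevel t (hwo t), t), fun a b hab => congrArg Prod.snd hab⟩, Iff.rfl⟩ ?_
    infer_instance
  have hmono : ∀ {s t : T}, s < t → rT s t := fun {s t} hst =>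
    Prod.Lex.left _ _ (treeLevel_lt_of_lt hwo hst)
  have hle : ∀ {s t : T}, rT s t → treeLevel s (hwo s) ≤ treeLevel t (hwo t) := by
    intro s t hst
    rcases Prod.lex_iff.1 hst with h' | ⟨h', -⟩
    · exact le_of_lt h'
    · exact le_of_eq h'
  -- #T = κ and the order type of rT is κ.ord
  have hTcard : κ ≤ #T := by
    have hex : ∀ x : κ.ord.ToType, ∃ t : T,
        treeLevel t (hwo t) = @Ordinal.typein _ (· < ·) iwoX x := by
      intro x
      refine hne _ ?_
      have := @Ordinal.typein_lt_type _ (· < ·) iwoX x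
      rwa [Ordinal.type_toType] at this
    choose i hi using hex
    have hinj : Function.Injective i := by
      intro x y hxy
      have hx := hi x
      rw [hxy, hi y] at hx
      exact (@Ordinal.typein_inj _ (· < ·) iwoX x y).1 hx.symm
    calc κ = #κ.ord.ToType := by rw [Cardinal.mk_toType, Cardinal.card_ord]
    _ ≤ #T := Cardinal.mk_le_of_injective hinj
  have htype : @Ordinal.type T rT irT = κ.ord := by
    apply le_antisymm
    · by_contra hlt
      replace hlt : κ.ord < @Ordinal.type T rT irT := lt_of_not_ge hlt
      obtain ⟨t, ht⟩ := @Ordinal.typein_surj T rT irT _ hlt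
      have hcard : #{s : T | rT s t} = κ := by
        have hct := @Ordinal.card_typein T rT irT t
        refine hct.symm.trans ?_
        rw [ht]
        exact Cardinal.card_ord κ
      have hsub : #{s : T | rT s t} ≤
          #{u : T | treeLevel u (hwo u) ≤ treeLevel t (hwo t)} :=
        Cardinal.mk_le_mk_of_subset (fun s hs => hle hs)
      rw [hcard] at hsub
      exact absurd (lt_of_le_of_lt hsub (cardTle hwo hreg hsmall (hheight t))) (lt_irrefl κ)
    · rw [Cardinal.ord_le, Ordinal.card_type]
      exact hTcard
  -- the order isomorphism g : (T, rT) ≃r (κ.ord.ToType, <)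
  have htype2 : @Ordinal.type T rT irT = @Ordinal.type κ.ord.ToType (· < ·) iwoX :=
    htype.trans (Ordinal.type_toType κ.ord).symm
  obtain ⟨g⟩ := (@Ordinal.type_eq T κ.ord.ToType rT (· < ·) irT iwoX).1 htype2
  set q : T → κ.ord.ToType := fun t => g t with hq
  set p : κ.ord.ToType → T := fun x => g.symm x with hp
  have hpq : ∀ x, q (p x) = x := fun x => g.apply_symm_apply x
  have hqp : ∀ t, p (q t) = t := fun t => g.symm_apply_apply t
  have hqlt : ∀ {s t : T}, rT s t ↔ q s < q t := fun {s t} => g.map_rel_iff.symm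
  have hqmono : ∀ {s t : T}, s < t → q s < q t := fun hst => hqlt.1 (hmono hst)
  -- the thin list
  set d : κ.ord.ToType → Set κ.ord.ToType := fun α => {x | p x < p α} with hd
  have hdsub : ∀ α, d α ⊆ Set.Iio α := by
    intro α x hx
    have := hqmono hx
    rwa [hpq, hpq] at this
  -- levels of elements all of whose predecessors get mapped below α
  have levelLe : ∀ (α : κ.ord.ToType) (u : T), (∀ v : T, v < u → q v < α) →
      treeLevel u (hwo u) ≤ @Ordinal.typein _ (· < ·) iwoX α := by
    intro α u hu
    rw [← @Ordinal.type_subrel _ (· < ·) iwoX α]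
    haveI := hwo u
    refine (@Ordinal.type_le_iff' _ _ _ _ (hwo u) inferInstance).2 ⟨?_⟩
    refine ⟨⟨fun v => ⟨q v.1, hu v.1 v.2⟩, ?_⟩, ?_⟩
    · intro a b hab
      have h1 : q a.1 = q b.1 := congrArg Subtype.val hab
      exact Subtype.ext (g.injective h1)
    · intro a b
      constructor
      · intro hab
        have hab' : q a.1 < q b.1 := hab
        rcases @trichotomous _ (fun a b : {v : T // v < u} => a.1 < b.1)
          (hwo u).toTrichotomous a b with h' | h' | h'
        · exact h'
        · exact absurd (by rw [h'] at hab'; exact hab') (lt_irrefl _)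
        · exact absurd (lt_trans hab' (hqmono h')) (lt_irrefl _)
      · intro hab
        show q a.1 < q b.1
        exact hqmono hab
  -- thinness
  have hthin : IsThinSeqList κ d := by
    refine ⟨hdsub, ?_⟩
    intro α
    set W : Set T := {u : T | treeLevel u (hwo u) ≤ @Ordinal.typein _ (· < ·) iwoX α} with hW
    have hWcard : #W < κ := by
      refine cardTle hwo hreg hsmall ?_
      have := @Ordinal.typein_lt_type _ (· < ·) iwoX α
      rwa [Ordinal.type_toType] at this
    set F : W → Set κ.ord.ToType := fun u => {x | p x < u.1} with hF
    have hsub : seqLevel d α ⊆ Set.range F := by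
      rintro S ⟨β, hαβ, rfl⟩
      by_cases hA : ∀ v : T, v < p β → q v < α
      · refine ⟨⟨p β, levelLe α (p β) hA⟩, ?_⟩
        ext x
        simp only [hF, Set.mem_setOf_eq, Set.mem_inter_iff, Set.mem_Iio]
        constructor
        · intro hx
          have h2 := hA (p x) hx
          rw [hpq] at h2
          exact ⟨hx, h2⟩
        · exact fun hx => hx.1
      · push_neg at hA
        obtain ⟨v₀, hv₀, hv₀'⟩ := hA
        set bad : Set {v : T // v < p β} := {v | α ≤ q v.1} with hbad
        have hbadne : bad.Nonempty := ⟨⟨v₀, hv₀⟩, hv₀'⟩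
        set s₀ := (hwo (p β)).wf.min bad hbadne with hs₀
        have hs₀bad : α ≤ q s₀.1 := (hwo (p β)).wf.min_mem bad hbadne
        have hAs₀ : ∀ v : T, v < s₀.1 → q v < α := by
          intro v hv
          by_contra hvbad
          exact (hwo (p β)).wf.not_lt_min bad
            (x := ⟨v, lt_trans hv s₀.2⟩) (not_lt.1 hvbad) hv
        refine ⟨⟨s₀.1, levelLe α s₀.1 hAs₀⟩, ?_⟩
        ext x
        simp only [hF, Set.mem_setOf_eq, Set.mem_inter_iff, Set.mem_Iio]
        constructor
        · intro hx
          refine ⟨lt_trans hx s₀.2, ?_⟩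
          have h2 := hAs₀ (p x) hx
          rwa [hpq] at h2
        · rintro ⟨hx1, hx2⟩
          have htri := @trichotomous _ (fun a b : {v : T // v < p β} => a.1 < b.1)
            (hwo (p β)).toTrichotomous ⟨p x, hx1⟩ s₀
          rcases htri with h' | h' | h'
          · exact h'
          · exfalso
            have hpx : p x = s₀.1 := congrArg Subtype.val h'
            have hxx : q s₀.1 = x := by rw [← hpx, hpq]
            rw [← hxx] at hx2
            exact absurd hx2 (not_lt.2 hs₀bad)
          · exfalso
            have hqq := hqmono h'
            rw [hpq] at hqq
            exact absurd (lt_trans hqq hx2) (not_lt.2 hs₀bad)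
    calc #(seqLevel d α) ≤ #(Set.range F) := Cardinal.mk_le_mk_of_subset hsub
    _ ≤ #W := Cardinal.mk_range_le
    _ < κ := hWcard
  -- get the branch of the list
  obtain ⟨b, hb⟩ := h d hthin
  -- boundedness of small subsets of κ.ord.ToType
  have hbound : ∀ S : Set κ.ord.ToType, #S < κ → ∃ α : κ.ord.ToType, ∀ x ∈ S, x < α := by
    intro S hS
    have hcof : #S < Ordinal.cof (@Ordinal.type κ.ord.ToType (· < ·) iwoX) := by
      rw [Ordinal.type_toType, hreg.cof_eq]
      exact hS
    by_contra hcon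
    push_neg at hcon
    have hc := Order.cof_le (α := κ.ord.ToType) (s := S) hcon
    rw [Ordinal.cof_toType, hreg.cof_eq] at hc
    exact absurd hS (not_lt.2 hc)
  -- the branch of the tree
  refine ⟨{t : T | q t ∈ b}, ?_, ?_⟩
  · intro t₁ ht₁ t₂ ht₂ hne'
    obtain ⟨α, hα⟩ := hbound {q t₁, q t₂}
      (lt_trans (lt_aleph0_of_finite _) huncount)
    obtain ⟨β, hαβ, hEq⟩ := hb α
    have h1 : t₁ < p β := by
      have : q t₁ ∈ b ∩ Set.Iio α := ⟨ht₁, hα _ (Set.mem_insert _ _)⟩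
      rw [hEq] at this
      have := this.1
      rwa [hd, Set.mem_setOf_eq, hqp] at this
    have h2 : t₂ < p β := by
      have : q t₂ ∈ b ∩ Set.Iio α :=
        ⟨ht₂, hα _ (Set.mem_insert_of_mem _ (Set.mem_singleton _))⟩
      rw [hEq] at this
      have := this.1
      rwa [hd, Set.mem_setOf_eq, hqp] at this
    rcases @trichotomous _ (fun a b : {v : T // v < p β} => a.1 < b.1)
      (hwo (p β)).toTrichotomous ⟨t₁, h1⟩ ⟨t₂, h2⟩ with h' | h' | h'
    · exact Or.inl (le_of_lt h')
    · exact absurd (congrArg Subtype.val h') hne'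
    · exact Or.inr (le_of_lt h')
  · intro δ hδ
    have hScard : #(q '' {u : T | treeLevel u (hwo u) ≤ δ}) < κ :=
      lt_of_le_of_lt Cardinal.mk_image_le (cardTle hwo hreg hsmall hδ)
    obtain ⟨α, hα⟩ := hbound _ hScard
    obtain ⟨β, hαβ, hEq⟩ := hb α
    have hβlev : δ < treeLevel (p β) (hwo (p β)) := by
      by_contra hcon
      replace hcon : treeLevel (p β) (hwo (p β)) ≤ δ := le_of_not_gt hcon
      have : q (p β) ∈ q '' {u : T | treeLevel u (hwo u) ≤ δ} := ⟨p β, hcon, rfl⟩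
      have := hα _ this
      rw [hpq] at this
      exact absurd (lt_trans hαβ this) (lt_irrefl _)
    obtain ⟨v, hv⟩ := @Ordinal.typein_surj _ (fun a b : {v : T // v < p β} => a.1 < b.1)
      (hwo (p β)) δ hβlev
    have hlev : treeLevel v.1 (hwo v.1) = δ := by
      rw [treeLevel_eq_typein hwo v.2]
      exact hv
    have hqv : q v.1 < α := by
      refine hα _ ⟨v.1, le_of_eq hlev, rfl⟩
    have hmem : q v.1 ∈ b := by
      have : q v.1 ∈ d β ∩ Set.Iio α := by
        refine ⟨?_, hqv⟩
        rw [hd, Set.mem_setOf_eq, hqp]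
        exact v.2
      rw [← hEq] at this
      exact this.1
    exact ⟨v.1, hmem, hlev⟩
end
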